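/- Let m ∈ {5,6,10} or m ≥ 13 be square-free, and let 𝒪 be the ring of integers of ℚ(√-m) with ω as usual (so N(ω) = ωω̄ ≥ 4). Then no diagonal positive definite Hermitian 𝒪-lattice L = ⟨a₁,…,aₙ⟩ represents the binary Hermitian lattice with Gram matrix [[2,ω],[ω̄,c]] for any integer c with ωω̄/2 < c < ωω̄. -/

import Mathlib

open Complex Matrix
open scoped ComplexOrder

/-- ω for ℚ(√-m): √-m if m ≡ 1,2 (mod 4), (1+√-m)/2 if m ≡ 3 (mod 4). -/
noncomputable def omg (m : ℕ) : ℂ :=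
  if m % 4 = 3 then (1 + Real.sqrt m * Complex.I) / 2 else Real.sqrt m * Complex.I

/-- The ring of integers 𝒪 = ℤ[ω] of ℚ(√-m), as a subring of ℂ. -/
noncomputable def ringO (m : ℕ) : Subalgebra ℤ ℂ := Algebra.adjoin ℤ {omg m}

open ComplexConjugate

/-!
Every element of `𝒪 = ℤ[ω]` is `u + vω` with `u, v ∈ ℤ`. As `|Re ω| ≤ 1/2` and `N(ω) ≥ 1`, an
element with `v ≠ 0` has norm at least `N(ω)`. In a representation by `⟨a₁,…,aₙ⟩` every entry `x`
of the first row has `N(x) ≤ 2` and every entry of the second row `N(x) ≤ c`. Both bounds are below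
`N(ω)`, so all entries of `X` are rational integers, and then `ω = Σ aⱼ x₀ⱼ x̄₁ⱼ` would be real.
-/

theorem exists_eq_intCast_add_mul_of_mem_adjoin {R : Type*} [CommRing R] {x : R} {A B : ℤ}
    (hx : x ^ 2 = A + B * x) {y : R} (hy : y ∈ Algebra.adjoin ℤ {x}) :
    ∃ u v : ℤ, y = u + v * x := by
  induction hy using Algebra.adjoin_induction with
  | mem y hy => exact ⟨0, 1, by simp [Set.mem_singleton_iff.mp hy]⟩
  | algebraMap r => exact ⟨r, 0, by simp⟩
  | add y z _ _ hy hz =>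
    obtain ⟨u, v, rfl⟩ := hy
    obtain ⟨s, t, rfl⟩ := hz
    exact ⟨u + s, v + t, by push_cast; ring⟩
  | mul y z _ _ hy hz =>
    obtain ⟨u, v, rfl⟩ := hy
    obtain ⟨s, t, rfl⟩ := hz
    refine ⟨u * s + v * t * A, u * t + v * s + v * t * B, ?_⟩
    push_cast
    linear_combination (v * t : R) * hx

theorem one_le_sq_sub_abs_mul_add_sq {u v : ℤ} (hv : v ≠ 0) :
    1 ≤ u ^ 2 - |u * v| + v ^ 2 := by
  rw [abs_mul]
  have : 0 < |v| := abs_pos.mpr hv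
  rcases le_total |u| |v| with h | h <;> nlinarith [sq_abs u, sq_abs v, abs_nonneg u]

theorem normSq_le_normSq_intCast_add_mul {x : ℂ} (hre : |x.re| ≤ 1 / 2) (hx : 1 ≤ normSq x)
    (u : ℤ) {v : ℤ} (hv : v ≠ 0) : normSq x ≤ normSq (u + v * x) := by
  have hnorm : normSq (u + v * x) = u ^ 2 + 2 * u * v * x.re + v ^ 2 * normSq x := by
    simp only [normSq_apply, add_re, add_im, mul_re, mul_im, intCast_re, intCast_im, zero_mul,
      sub_zero, add_zero, zero_add]
    ring
  -- `|2uv · Re x| ≤ |uv|`, and `u² - |uv| + v²` is a positive definite integral form.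
  have hcross : -|(u * v : ℝ)| ≤ 2 * u * v * x.re := by
    calc -|(u * v : ℝ)| ≤ -(|(u * v : ℝ)| * (2 * |x.re|)) := by
          nlinarith [abs_nonneg (u * v : ℝ)]
      _ = -|2 * u * v * x.re| := by simp only [abs_mul, abs_two]; ring
      _ ≤ 2 * u * v * x.re := neg_abs_le _
  have hint : (1 : ℝ) ≤ u ^ 2 - |(u * v : ℝ)| + v ^ 2 := by
    exact_mod_cast one_le_sq_sub_abs_mul_add_sq (u := u) hv
  have hv2 : (1 : ℝ) ≤ v ^ 2 := by
    exact_mod_cast one_le_sq_iff_one_le_abs _ |>.mpr (Int.one_le_abs hv)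
  nlinarith

theorem mul_diagonal_mul_conjTranspose_apply {ι κ : Type*} [Fintype ι] [DecidableEq ι]
    (X : Matrix κ ι ℂ) (d : ι → ℂ) (i k : κ) :
    (X * diagonal d * Xᴴ) i k = ∑ j, X i j * d j * conj (X k j) := by
  rw [mul_apply]
  simp only [mul_diagonal, conjTranspose_apply, Complex.star_def]

theorem normSq_le_of_ofReal_eq_sum {ι : Type*} [Fintype ι] (z : ι → ℂ) {w : ι → ℕ}
    (hw : ∀ i, 0 < w i) {r : ℝ} (h : (r : ℂ) = ∑ i, z i * w i * conj (z i)) (j : ι) :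
    normSq (z j) ≤ r := by
  have hr : r = ∑ i, (w i : ℝ) * normSq (z i) := by
    apply ofReal_injective
    rw [h]
    push_cast
    exact Finset.sum_congr rfl fun i _ => by rw [mul_comm (z i), mul_assoc, mul_conj]
  calc normSq (z j) ≤ (w j : ℝ) * normSq (z j) :=
        le_mul_of_one_le_left (normSq_nonneg _) (by exact_mod_cast hw j)
    _ ≤ r := hr ▸ Finset.single_le_sum (f := fun i => (w i : ℝ) * normSq (z i))
        (fun i _ => mul_nonneg (Nat.cast_nonneg _) (normSq_nonneg _)) (Finset.mem_univ j)

theorem omg_sq (m : ℕ) : ∃ A B : ℤ, omg m ^ 2 = A + B * omg m := by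
  have hs : (Real.sqrt m : ℂ) ^ 2 = m := by
    norm_cast
    rw [Real.sq_sqrt (Nat.cast_nonneg m)]
  by_cases h4 : m % 4 = 3
  · obtain ⟨k, hk⟩ : ∃ k : ℕ, m + 1 = 4 * k := ⟨(m + 1) / 4, by omega⟩
    have hk' : (m : ℂ) + 1 = 4 * k := by exact_mod_cast hk
    refine ⟨-k, 1, ?_⟩
    rw [omg, if_pos h4]
    push_cast
    linear_combination (I ^ 2 / 4) * hs + (m / 4 : ℂ) * I_sq - (1 / 4 : ℂ) * hk'
  · refine ⟨-m, 0, ?_⟩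
    rw [omg, if_neg h4]
    push_cast
    linear_combination I ^ 2 * hs + (m : ℂ) * I_sq

theorem omg_re (m : ℕ) : (omg m).re = if m % 4 = 3 then 1 / 2 else 0 := by
  unfold omg; split_ifs <;> simp

theorem omg_im (m : ℕ) : (omg m).im = if m % 4 = 3 then Real.sqrt m / 2 else Real.sqrt m := by
  unfold omg; split_ifs <;> simp

theorem normSq_omg (m : ℕ) :
    normSq (omg m) = if m % 4 = 3 then (1 + m : ℝ) / 4 else (m : ℝ) := by
  have hs := Real.sq_sqrt (Nat.cast_nonneg (α := ℝ) m)
  rw [normSq_apply, omg_re, omg_im]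
  split_ifs <;> nlinarith

theorem abs_re_omg_le (m : ℕ) : |(omg m).re| ≤ 1 / 2 := by
  rw [omg_re]; split_ifs <;> norm_num

theorem im_omg_ne_zero {m : ℕ} (hm : m ≠ 0) : (omg m).im ≠ 0 := by
  have : 0 < Real.sqrt m := Real.sqrt_pos.mpr (by positivity)
  rw [omg_im]; split_ifs <;> positivity

theorem two_lt_normSq_omg {m : ℕ} (hm : m = 5 ∨ m = 6 ∨ m = 10 ∨ 13 ≤ m) :
    2 < normSq (omg m) := by
  rw [normSq_omg]
  split_ifs with h4
  · have : (15 : ℝ) ≤ m := by exact_mod_cast (show 15 ≤ m by omega)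
    linarith
  · have : (5 : ℝ) ≤ m := by exact_mod_cast (show 5 ≤ m by omega)
    linarith

theorem im_eq_zero_of_mem_ringO {m : ℕ} (hω : 1 ≤ normSq (omg m)) {y : ℂ} (hy : y ∈ ringO m)
    (hlt : normSq y < normSq (omg m)) : y.im = 0 := by
  obtain ⟨A, B, hsq⟩ := omg_sq m
  obtain ⟨u, v, rfl⟩ := exists_eq_intCast_add_mul_of_mem_adjoin hsq hy
  obtain rfl | hv := eq_or_ne v 0
  · simp
  · exact absurd (normSq_le_normSq_intCast_add_mul (abs_re_omg_le m) hω u hv) hlt.not_ge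

theorem no_diagonal_represents_general (m : ℕ)
    (hm : m = 5 ∨ m = 6 ∨ m = 10 ∨ 13 ≤ m)
    (c : ℤ)
    (hc2 : (c : ℝ) < Complex.normSq (omg m))
    (n : ℕ) (a : Fin n → ℕ) (ha : ∀ i, 0 < a i) :
    ¬∃ X : Matrix (Fin 2) (Fin n) ℂ, (∀ i j, X i j ∈ ringO m) ∧
      !![(2 : ℂ), omg m; (starRingEnd ℂ) (omg m), (c : ℂ)]
        = X * Matrix.diagonal (fun i => (a i : ℂ)) * Xᴴ := by
  rintro ⟨X, hX, hEq⟩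
  have hω := two_lt_normSq_omg hm
  have entry (i k : Fin 2) :
      !![(2 : ℂ), omg m; conj (omg m), (c : ℂ)] i k = ∑ j, X i j * a j * conj (X k j) := by
    rw [hEq, mul_diagonal_mul_conjTranspose_apply]
  have row_real (i : Fin 2) (r : ℝ) (hr : r < normSq (omg m))
      (hii : (r : ℂ) = !![(2 : ℂ), omg m; conj (omg m), (c : ℂ)] i i) (j : Fin n) :
      (X i j).im = 0 :=
    im_eq_zero_of_mem_ringO (by linarith) (hX i j)
      ((normSq_le_of_ofReal_eq_sum (X i) ha (hii.trans (entry i i)) j).trans_lt hr)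
  have hX0 := row_real 0 2 hω (by simp)
  have hX1 := row_real 1 c hc2 (by simp)
  apply im_omg_ne_zero (show m ≠ 0 by omega)
  simpa [im_sum, mul_im, hX0, hX1] using congrArg im (entry 0 1)

/-- No diagonal Hermitian lattice ⟨a₁,…,aₙ⟩ represents [[2,ω],[ω̄,c]] when
ωω̄/2 < c < ωω̄ (thus when m = 5, 6, 10 or m ≥ 13, there is no diagonal
2-universal Hermitian lattice). -/
theorem no_diagonal_represents (m : ℕ) (hsf : Squarefree m)
    (hm : m = 5 ∨ m = 6 ∨ m = 10 ∨ 13 ≤ m)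
    (c : ℤ) (hc1 : Complex.normSq (omg m) / 2 < (c : ℝ))
    (hc2 : (c : ℝ) < Complex.normSq (omg m))
    (n : ℕ) (a : Fin n → ℕ) (ha : ∀ i, 0 < a i) :
    ¬∃ X : Matrix (Fin 2) (Fin n) ℂ, (∀ i j, X i j ∈ ringO m) ∧
      !![(2 : ℂ), omg m; (starRingEnd ℂ) (omg m), (c : ℂ)]
        = X * Matrix.diagonal (fun i => (a i : ℂ)) * Xᴴ :=
  no_diagonal_represents_general m hm c hc2 n a ha
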